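/- Let α, β ∈ NC(n) with α ≪ β. The correspondence sending each β-special block V of α to the block W of β with min(V) = min(W) and max(V) = max(W) is a well-defined bijection from the set of β-special blocks of α onto the set of all blocks of β. -/

import Mathlib

/-! Blocks of a partition are determined by their minima, so `V ↦ blockOf β (min V)` is well
defined and injective on the `β`-special blocks of `α`. For surjectivity, `α ≪ β` gives a block
`V` of `α` containing `min W` and `max W`; `V` lies in a block of `β`, necessarily `W`, so `V` and
`W` have the same extremes. -/

open scoped Classical

/-- The minimum of a finset of naturals (`0` if empty). -/
noncomputable def fmin (A : Finset ℕ) : ℕ := sInf (A : Set ℕ)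

/-- The maximum of a finset of naturals (`0` if empty). -/
noncomputable def fmax (A : Finset ℕ) : ℕ := sSup (A : Set ℕ)

/-- `α` is a partition of the finite set `F ⊆ ℕ`. -/
def IsPartitionOfSet (F : Finset ℕ) (α : Finset (Finset ℕ)) : Prop :=
  (∀ V ∈ α, V.Nonempty) ∧ (∀ V ∈ α, V ⊆ F) ∧ (∀ m ∈ F, ∃ V ∈ α, m ∈ V) ∧
    ∀ V ∈ α, ∀ W ∈ α, V ≠ W → V ∩ W = ∅

/-- `α` is a partition of `{1,…,n}`. -/
def IsPartitionOf (n : ℕ) (α : Finset (Finset ℕ)) : Prop :=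
  IsPartitionOfSet (Finset.Icc 1 n) α

/-- Two distinct blocks of the family `π` cross: there are `a < b < c < d` with
`a, c` in one block and `b, d` in a different block. -/
def IsCrossing (π : Finset (Finset ℕ)) : Prop :=
  ∃ A ∈ π, ∃ B ∈ π, A ≠ B ∧
    ∃ a ∈ A, ∃ b ∈ B, ∃ c ∈ A, ∃ d ∈ B, a < b ∧ b < c ∧ c < d

/-- `α ∈ NC(n)`: a non-crossing partition of `{1,…,n}`. -/
def IsNCPartition (n : ℕ) (α : Finset (Finset ℕ)) : Prop :=
  IsPartitionOf n α ∧ ¬ IsCrossing α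

/-- Reverse refinement order `α ≤ β`: every block of `α` is contained in a block of `β`
(equivalently, every block of `β` is a union of blocks of `α`). -/
def Refines (α β : Finset (Finset ℕ)) : Prop := ∀ V ∈ α, ∃ W ∈ β, V ⊆ W

/-- The partial order `α ≪ β`: `α ≤ β` and for every block `W` of `β` there is a block
`V` of `α` containing both `min W` and `max W`. -/
def LL (α β : Finset (Finset ℕ)) : Prop :=
  Refines α β ∧ ∀ W ∈ β, ∃ V ∈ α, fmin W ∈ V ∧ fmax W ∈ V

/-- A block `V` (of `α`) is `β`-special: some block `W` of `β` has the same min and max. -/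
def SpecialBlock (β : Finset (Finset ℕ)) (V : Finset ℕ) : Prop :=
  ∃ W ∈ β, fmin V = fmin W ∧ fmax V = fmax W

/-- `V` is an outer block of `α`: no block of `α` strictly nests around it. -/
def OuterBlock (α : Finset (Finset ℕ)) (V : Finset ℕ) : Prop :=
  ∀ V' ∈ α, ¬ (fmin V' < fmin V ∧ fmax V < fmax V')

/-- `π` is a linked partition of the finite set `F ⊆ ℕ`. -/
def IsLinkedPartitionOfSet (F : Finset ℕ) (π : Finset (Finset ℕ)) : Prop :=
  (∀ A ∈ π, A.Nonempty) ∧ (∀ A ∈ π, A ⊆ F) ∧ (∀ m ∈ F, ∃ A ∈ π, m ∈ A) ∧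
    ∀ A ∈ π, ∀ B ∈ π, A ≠ B →
      A ∩ B = ∅ ∨
        (2 ≤ A.card ∧ 2 ≤ B.card ∧ (A ∩ B).card = 1 ∧ fmin A ≠ fmin B ∧
          ∀ x ∈ A ∩ B, x = fmin A ∨ x = fmin B)

/-- `π ∈ NCL(F)`: a non-crossing linked partition of the finite set `F`. -/
def IsNCLOfSet (F : Finset ℕ) (π : Finset (Finset ℕ)) : Prop :=
  IsLinkedPartitionOfSet F π ∧ ¬ IsCrossing π

/-- `π ∈ NCL(n)`: a non-crossing linked partition of `{1,…,n}`. -/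
def IsNCL (n : ℕ) (π : Finset (Finset ℕ)) : Prop :=
  IsNCLOfSet (Finset.Icc 1 n) π

/-- The number of blocks of `π` containing `m`. -/
noncomputable def coverCount (π : Finset (Finset ℕ)) (m : ℕ) : ℕ :=
  (π.filter fun A => m ∈ A).card

/-- `m` is singly-covered by `π`: it lies in exactly one block. -/
def SinglyCovered (π : Finset (Finset ℕ)) (m : ℕ) : Prop := coverCount π m = 1

/-- `m` is doubly-covered by `π`: it lies in exactly two blocks. -/
def DoublyCovered (π : Finset (Finset ℕ)) (m : ℕ) : Prop := coverCount π m = 2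

/-- The partition `π̂` generated by the blocks of `π`: its blocks are the connected
components of the ground set under the relation of lying in a common block of `π`. -/
noncomputable def genPart (π : Finset (Finset ℕ)) : Finset (Finset ℕ) :=
  (π.sup id).image fun m =>
    (π.sup id).filter fun x =>
      Relation.EqvGen (fun a b => ∃ A ∈ π, a ∈ A ∧ b ∈ A) m x

/-- The unlinking `π̌` of a linked partition `π`. -/
noncomputable def unlink (π : Finset (Finset ℕ)) : Finset (Finset ℕ) :=
  π.image fun A => if SinglyCovered π (fmin A) then A else A.erase (fmin A)

/-- The block of `α` containing `m` (empty if there is none). -/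
noncomputable def blockOf (α : Finset (Finset ℕ)) (m : ℕ) : Finset ℕ :=
  (α.filter fun V => m ∈ V).sup id

/-- The successor of `m` in the cycle on the block `V` (elements in increasing order). -/
noncomputable def nextInBlock (V : Finset ℕ) (m : ℕ) : ℕ :=
  if m = fmax V then fmin V else fmin (V.filter fun x => m < x)

/-- The predecessor of `m` in the cycle on the block `V`. -/
noncomputable def prevInBlock (V : Finset ℕ) (m : ℕ) : ℕ :=
  if m = fmin V then fmax V else fmax (V.filter fun x => x < m)

/-- The permutation `P_α` associated to a partition `α`, as a function: each block
`{i₁ < i₂ < ⋯ < iₘ}` becomes the cycle `i₁ ↦ i₂ ↦ ⋯ ↦ iₘ ↦ i₁`. -/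
noncomputable def permOf (α : Finset (Finset ℕ)) (m : ℕ) : ℕ :=
  if m ∈ blockOf α m then nextInBlock (blockOf α m) m else m

/-- The inverse permutation `P_α⁻¹`, as a function. -/
noncomputable def permOfInv (α : Finset (Finset ℕ)) (m : ℕ) : ℕ :=
  if m ∈ blockOf α m then prevInBlock (blockOf α m) m else m

/-- The action `τ·α` of a map `τ` on a partition `α = {V₁,…,V_p}`, giving
`{τ(V₁),…,τ(V_p)}`. -/
def mapPart (τ : ℕ → ℕ) (α : Finset (Finset ℕ)) : Finset (Finset ℕ) :=
  α.image fun V => V.image τ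

/-- The cycled unlinking `π° := P_{π̂}⁻¹ · π̌`. -/
noncomputable def cycUnlink (π : Finset (Finset ℕ)) : Finset (Finset ℕ) :=
  mapPart (permOfInv (genPart π)) (unlink π)

/-- `NC(n)` as a finset. -/
noncomputable def NCF (n : ℕ) : Finset (Finset (Finset ℕ)) :=
  ((Finset.Icc 1 n).powerset.powerset).filter (IsNCPartition n)

/-- `NCL(n)` as a finset. -/
noncomputable def NCLF (n : ℕ) : Finset (Finset (Finset ℕ)) :=
  ((Finset.Icc 1 n).powerset.powerset).filter (IsNCL n)

/-- The restriction `π|_E`: the blocks of `π` contained in `E`. -/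
def restrictL (π : Finset (Finset ℕ)) (E : Finset ℕ) : Finset (Finset ℕ) :=
  π.filter fun A => A ⊆ E

/-- The partition `β₀` obtained from `β` by leaving blocks of size `≤ 2` intact and
breaking each block `W` with `|W| ≥ 3` into the doubleton `{min W, max W}` together
with `|W| - 2` singletons. -/
noncomputable def breakBlocks (β : Finset (Finset ℕ)) : Finset (Finset ℕ) :=
  β.biUnion fun W =>
    if W.card ≤ 2 then {W}
    else insert {fmin W, fmax W} ((W \ {fmin W, fmax W}).image fun x => ({x} : Finset ℕ))

lemma fmin_mem {A : Finset ℕ} (h : A.Nonempty) : fmin A ∈ A := by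
  exact_mod_cast Nat.sInf_mem (s := (A : Set ℕ)) (by exact_mod_cast h)

lemma fmax_mem {A : Finset ℕ} (h : A.Nonempty) : fmax A ∈ A := by
  exact_mod_cast Nat.sSup_mem (s := (A : Set ℕ)) (by exact_mod_cast h) A.finite_toSet.bddAbove

lemma fmin_le {A : Finset ℕ} {a : ℕ} (h : a ∈ A) : fmin A ≤ a :=
  Nat.sInf_le h

lemma le_fmax {A : Finset ℕ} {a : ℕ} (h : a ∈ A) : a ≤ fmax A :=
  le_csSup A.finite_toSet.bddAbove h

lemma fmin_eq_and_fmax_eq_of_subset {V W : Finset ℕ} (hVW : V ⊆ W)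
    (hmin : fmin W ∈ V) (hmax : fmax W ∈ V) : fmin V = fmin W ∧ fmax V = fmax W :=
  have hV : V.Nonempty := ⟨_, hmin⟩
  ⟨le_antisymm (fmin_le hmin) (fmin_le (hVW (fmin_mem hV))),
    le_antisymm (le_fmax (hVW (fmax_mem hV))) (le_fmax hmax)⟩

namespace IsPartitionOfSet

variable {F : Finset ℕ} {π : Finset (Finset ℕ)} {V W : Finset ℕ}

lemma eq_of_mem_of_mem (hπ : IsPartitionOfSet F π) (hV : V ∈ π) (hW : W ∈ π) {x : ℕ}
    (hxV : x ∈ V) (hxW : x ∈ W) : V = W := by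
  by_contra hne
  have hx : x ∈ V ∩ W := Finset.mem_inter.2 ⟨hxV, hxW⟩
  simp [hπ.2.2.2 V hV W hW hne] at hx

lemma eq_of_fmin_eq (hπ : IsPartitionOfSet F π) (hV : V ∈ π) (hW : W ∈ π)
    (h : fmin V = fmin W) : V = W :=
  hπ.eq_of_mem_of_mem hV hW (fmin_mem (hπ.1 V hV)) (h ▸ fmin_mem (hπ.1 W hW))

lemma blockOf_eq (hπ : IsPartitionOfSet F π) (hW : W ∈ π) {m : ℕ} (hm : m ∈ W) :
    blockOf π m = W := by
  have hblocks : π.filter (fun V => m ∈ V) = {W} := by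
    ext V
    simp only [Finset.mem_filter, Finset.mem_singleton]
    exact ⟨fun ⟨hV, hmV⟩ => hπ.eq_of_mem_of_mem hV hW hmV hm, by rintro rfl; exact ⟨hW, hm⟩⟩
  simp [blockOf, hblocks]

lemma blockOf_fmin (hπ : IsPartitionOfSet F π) (hW : W ∈ π) : blockOf π (fmin W) = W :=
  hπ.blockOf_eq hW (fmin_mem (hπ.1 W hW))

end IsPartitionOfSet

section SpecialBlock

variable {F : Finset ℕ} {α β : Finset (Finset ℕ)} {V : Finset ℕ}

lemma SpecialBlock.existsUnique (hβ : IsPartitionOfSet F β) (hV : SpecialBlock β V) :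
    ∃! W, W ∈ β ∧ fmin V = fmin W ∧ fmax V = fmax W := by
  obtain ⟨W, hW, hmin, hmax⟩ := hV
  exact ⟨W, ⟨hW, hmin, hmax⟩, fun W' ⟨hW', hmin', _⟩ =>
    hβ.eq_of_fmin_eq hW' hW (hmin'.symm.trans hmin)⟩

lemma SpecialBlock.blockOf_fmin (hβ : IsPartitionOfSet F β) (hV : SpecialBlock β V) :
    blockOf β (fmin V) ∈ β ∧ fmin V = fmin (blockOf β (fmin V)) ∧
      fmax V = fmax (blockOf β (fmin V)) := by
  obtain ⟨W, hW, hmin, hmax⟩ := hV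
  rw [hmin, hβ.blockOf_fmin hW]
  exact ⟨hW, rfl, hmax⟩

lemma LL.exists_fmin_eq_and_fmax_eq (hβ : IsPartitionOfSet F β) (hll : LL α β)
    {W : Finset ℕ} (hW : W ∈ β) : ∃ V ∈ α, fmin V = fmin W ∧ fmax V = fmax W := by
  obtain ⟨V, hV, hmin, hmax⟩ := hll.2 W hW
  obtain ⟨W', hW', hVW'⟩ := hll.1 V hV
  obtain rfl : W' = W := hβ.eq_of_mem_of_mem hW' hW (hVW' hmin) (fmin_mem (hβ.1 W hW))
  exact ⟨V, hV, fmin_eq_and_fmax_eq_of_subset hVW' hmin hmax⟩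

end SpecialBlock

/-- Let `α, β ∈ NC(n)` with `α ≪ β`. For every `β`-special block `V` of
`α` there is a unique block `W` of `β` with `min V = min W` and `max V = max W`
(namely the block of `β` containing `min V`), and the resulting correspondence is a
bijection from the `β`-special blocks of `α` onto the blocks of `β`. -/
theorem stmt7 (n : ℕ) (α β : Finset (Finset ℕ))
    (hα : IsNCPartition n α) (hβ : IsNCPartition n β) (hll : LL α β) :
    (∀ V ∈ α, SpecialBlock β V →
      ∃! W, W ∈ β ∧ fmin V = fmin W ∧ fmax V = fmax W) ∧
    (∀ V ∈ α, SpecialBlock β V →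
      blockOf β (fmin V) ∈ β ∧ fmin V = fmin (blockOf β (fmin V)) ∧
        fmax V = fmax (blockOf β (fmin V))) ∧
    Set.BijOn (fun V => blockOf β (fmin V))
      {V : Finset ℕ | V ∈ α ∧ SpecialBlock β V}
      {W : Finset ℕ | W ∈ β} := by
  have hα : IsPartitionOf n α := hα.1
  have hβ : IsPartitionOf n β := hβ.1
  refine ⟨fun V _ hV => hV.existsUnique hβ, fun V _ hV => hV.blockOf_fmin hβ, ?_, ?_, ?_⟩
  · rintro V ⟨-, hV⟩
    exact (hV.blockOf_fmin hβ).1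
  · rintro V ⟨hVα, hV⟩ V' ⟨hV'α, hV'⟩ hVV'
    refine hα.eq_of_fmin_eq hVα hV'α ?_
    rw [(hV.blockOf_fmin hβ).2.1, (hV'.blockOf_fmin hβ).2.1]
    exact congrArg fmin hVV'
  · intro W hW
    obtain ⟨V, hVα, hmin, hmax⟩ := hll.exists_fmin_eq_and_fmax_eq hβ hW
    exact ⟨V, ⟨hVα, W, hW, hmin, hmax⟩, by simp only [hmin, hβ.blockOf_fmin hW]⟩
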